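/- arXiv:2412.17409 — 4 statements merged into one kernel-verified Lean document; each statement's English description precedes it below -/
import Mathlib

section
/- Let X be a compact metric space, G a locally compact group acting continuously on X, and μ a Borel probability measure on X. If μ has discrete spectrum (i.e., for every continuous function f on X the orbit {g·f : g ∈ G} is precompact in L²(μ), where (g·f)(x) = f(gx)), then the product measure μ × μ on X × X also has discrete spectrum, i.e., for every continuous function F on X × X the set {g·F : g ∈ G} is precompact in L²(μ × μ), where (g·F)(x,y) = F(gx, gy). -/
/-!
Elementary tensors `f ⊗ g` span a dense subalgebra of `C(X × X, ℝ)` (Stone–Weierstrass). The orbit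
of `f ⊗ g` in `L²(μ × μ)` is the image of `orbit f × orbit g` under the continuous bilinear map
`(u, v) ↦ u ⊗ v`, hence precompact. As the Koopman maps `C(X × X, ℝ) → L²(μ × μ)` are
contractions, the functions with precompact orbit form a closed subspace, so they are all of
`C(X × X, ℝ)`.
-/

open MeasureTheory Topology

/-- A Borel probability measure `μ` on a compact metric space `X` with a continuous
`G`-action has *discrete spectrum* if for every continuous `f : X → ℝ` the orbit
`{g·f : g ∈ G}` is precompact in `L²(μ)`, where `(g·f)(x) = f (g • x)`. -/
def HasDiscreteSpectrum (G : Type*) {X : Type*} [Group G] [TopologicalSpace G]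
    [MetricSpace X] [CompactSpace X] [MeasurableSpace X] [BorelSpace X]
    [MulAction G X] [ContinuousSMul G X]
    (μ : Measure X) [IsProbabilityMeasure μ] : Prop :=
  ∀ f : C(X, ℝ),
    IsCompact (closure
      {F : Lp ℝ 2 μ | ∃ g : G,
        F = ContinuousMap.toLp 2 μ ℝ (f.comp ⟨fun x => g • x, continuous_const_smul g⟩)})

open Pointwise Set Filter ENNReal

section RelCompactOrbits

lemma Metric.totallyBounded_of_forall_exists_dist_lt {α : Type*} [PseudoMetricSpace α]
    {s : Set α} (h : ∀ ε > 0, ∃ t, TotallyBounded t ∧ ∀ x ∈ s, ∃ y ∈ t, dist x y < ε) :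
    TotallyBounded s := by
  refine Metric.totallyBounded_iff.2 fun ε hε => ?_
  obtain ⟨t, ht, hst⟩ := h (ε / 2) (half_pos hε)
  obtain ⟨c, hc, htc⟩ := Metric.totallyBounded_iff.1 ht (ε / 2) (half_pos hε)
  refine ⟨c, hc, fun x hx => ?_⟩
  obtain ⟨y, hy, hxy⟩ := hst x hx
  obtain ⟨z, hz, hyz⟩ := mem_iUnion₂.1 (htc hy)
  refine mem_iUnion₂.2 ⟨z, hz, ?_⟩
  calc dist x z ≤ dist x y + dist y z := dist_triangle x y z
    _ < ε := by rw [Metric.mem_ball] at hyz; linarith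

/-- Near `e`, equicontinuity puts a point `e'` whose orbit is totally bounded and uniformly close
to the orbit of `e`. -/
theorem isClosed_setOf_isCompact_closure_range {ι E F : Type*} [TopologicalSpace E]
    [PseudoMetricSpace F] [CompleteSpace F] {T : ι → E → F} (hT : Equicontinuous T) :
    IsClosed {e | IsCompact (closure (range fun i => T i e))} := by
  refine isClosed_of_closure_subset fun e he => ?_
  refine (TotallyBounded.closure ?_).isCompact_of_isClosed isClosed_closure
  refine Metric.totallyBounded_of_forall_exists_dist_lt fun ε hε => ?_
  obtain ⟨e', hnear, he'⟩ :=
    mem_closure_iff_nhds.1 he _ (Metric.equicontinuousAt_iff_right.1 (hT e) ε hε)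
  refine ⟨_, he'.totallyBounded, ?_⟩
  rintro _ ⟨i, rfl⟩
  exact ⟨T i e', subset_closure ⟨i, rfl⟩, hnear i⟩

variable {R E F ι : Type*} [Semiring R] [AddCommMonoid E] [Module R E]
  [TopologicalSpace F] [AddCommMonoid F] [Module R F] [ContinuousAdd F] [ContinuousConstSMul R F]
  [R1Space F]

def relCompactOrbits (T : ι → E →ₗ[R] F) : Submodule R E where
  carrier := {e | IsCompact (closure (range fun i => T i e))}
  zero_mem' := (isCompact_singleton (x := 0)).closure_of_subset <| by
    rintro _ ⟨i, rfl⟩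
    exact map_zero (T i)
  add_mem' {x y} hx hy := (hx.add hy).closure_of_subset <| by
    rintro _ ⟨i, rfl⟩
    simp only [map_add]
    exact add_mem_add (subset_closure ⟨i, rfl⟩) (subset_closure ⟨i, rfl⟩)
  smul_mem' c x hx := (hx.smul c).closure_of_subset <| by
    rintro _ ⟨i, rfl⟩
    simp only [map_smul]
    exact smul_mem_smul_set (subset_closure ⟨i, rfl⟩)

lemma mem_relCompactOrbits {T : ι → E →ₗ[R] F} {e : E} :
    e ∈ relCompactOrbits T ↔ IsCompact (closure (range fun i => T i e)) := Iff.rfl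

end RelCompactOrbits

namespace MeasureTheory

variable {α β 𝕜 : Type*} [MeasurableSpace α] [MeasurableSpace β] [RCLike 𝕜]
  {μ : Measure α} {ν : Measure β} [SFinite ν] {p : ℝ≥0∞}

theorem eLpNorm_prod_mul {f : α → 𝕜} {g : β → 𝕜} (hf : AEStronglyMeasurable f μ)
    (hg : AEStronglyMeasurable g ν) (hp0 : p ≠ 0) (hp : p ≠ ∞) :
    eLpNorm (fun z : α × β => f z.1 * g z.2) p (μ.prod ν) = eLpNorm f p μ * eLpNorm g p ν := by
  simp only [eLpNorm_eq_lintegral_rpow_enorm_toReal hp0 hp, enorm_mul,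
    ENNReal.mul_rpow_of_nonneg _ _ ENNReal.toReal_nonneg]
  rw [lintegral_prod_mul (hf.enorm.pow_const _) (hg.enorm.pow_const _),
    ENNReal.mul_rpow_of_nonneg _ _ (by positivity)]

theorem MemLp.prod_mul {f : α → 𝕜} {g : β → 𝕜} (hf : MemLp f p μ) (hg : MemLp g p ν)
    (hp0 : p ≠ 0) (hp : p ≠ ∞) : MemLp (fun z : α × β => f z.1 * g z.2) p (μ.prod ν) :=
  ⟨(hf.1.comp_quasiMeasurePreserving Measure.quasiMeasurePreserving_fst).mul
      (hg.1.comp_quasiMeasurePreserving Measure.quasiMeasurePreserving_snd),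
    by rw [eLpNorm_prod_mul hf.1 hg.1 hp0 hp]; exact ENNReal.mul_lt_top hf.2 hg.2⟩

namespace Lp

variable [Fact (1 ≤ p)]

noncomputable def mulProd (hp : p ≠ ∞) : Lp 𝕜 p μ →L[𝕜] Lp 𝕜 p ν →L[𝕜] Lp 𝕜 p (μ.prod ν) :=
  have hp0 : p ≠ 0 := (zero_lt_one.trans_le Fact.out).ne'
  have hmem (u : Lp 𝕜 p μ) (v : Lp 𝕜 p ν) := (Lp.memLp u).prod_mul (Lp.memLp v) hp0 hp
  LinearMap.mkContinuous₂
    (LinearMap.mk₂ 𝕜 (fun u v => (hmem u v).toLp _)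
      (fun u u' v => by
        rw [← MemLp.toLp_add]
        refine MemLp.toLp_congr _ _ ?_
        filter_upwards [Measure.quasiMeasurePreserving_fst.ae_eq_comp (Lp.coeFn_add u u')]
          with z hz
        simp only [Function.comp_apply] at hz
        simp only [hz, Pi.add_apply, add_mul])
      (fun c u v => by
        rw [← MemLp.toLp_const_smul]
        refine MemLp.toLp_congr _ _ ?_
        filter_upwards [Measure.quasiMeasurePreserving_fst.ae_eq_comp (Lp.coeFn_smul c u)]
          with z hz
        simp only [Function.comp_apply] at hz
        simp only [hz, Pi.smul_apply, smul_eq_mul, mul_assoc])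
      (fun u v v' => by
        rw [← MemLp.toLp_add]
        refine MemLp.toLp_congr _ _ ?_
        filter_upwards [Measure.quasiMeasurePreserving_snd.ae_eq_comp (Lp.coeFn_add v v')]
          with z hz
        simp only [Function.comp_apply] at hz
        simp only [hz, Pi.add_apply, mul_add])
      (fun c u v => by
        rw [← MemLp.toLp_const_smul]
        refine MemLp.toLp_congr _ _ ?_
        filter_upwards [Measure.quasiMeasurePreserving_snd.ae_eq_comp (Lp.coeFn_smul c v)]
          with z hz
        simp only [Function.comp_apply] at hz
        simp only [hz, Pi.smul_apply, smul_eq_mul, mul_left_comm]))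
    1 fun u v => by
      rw [one_mul, LinearMap.mk₂_apply, Lp.norm_toLp,
        eLpNorm_prod_mul (Lp.aestronglyMeasurable u) (Lp.aestronglyMeasurable v) hp0 hp,
        ENNReal.toReal_mul, Lp.norm_def, Lp.norm_def]

theorem coeFn_mulProd (hp : p ≠ ∞) (u : Lp 𝕜 p μ) (v : Lp 𝕜 p ν) :
    mulProd hp u v =ᵐ[μ.prod ν] fun z => u z.1 * v z.2 :=
  MemLp.coeFn_toLp ((Lp.memLp u).prod_mul (Lp.memLp v) (zero_lt_one.trans_le Fact.out).ne' hp)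

end Lp

end MeasureTheory

namespace ContinuousMap

def tensorSubmonoid (X Y : Type*) [TopologicalSpace X] [TopologicalSpace Y] :
    Submonoid C(X × Y, ℝ) where
  carrier := {F | ∃ (f : C(X, ℝ)) (g : C(Y, ℝ)), f.comp fst * g.comp snd = F}
  one_mem' := ⟨1, 1, by rw [one_comp, one_comp, one_mul]⟩
  mul_mem' := by
    rintro _ _ ⟨f, g, rfl⟩ ⟨f', g', rfl⟩
    exact ⟨f * f', g * g', by ext; simp only [mul_apply, comp_apply]; ring⟩

section Tensor

variable {X Y : Type*} [MetricSpace X] [MetricSpace Y]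

theorem separatesPoints_adjoin_tensorSubmonoid :
    (Algebra.adjoin ℝ (tensorSubmonoid X Y : Set C(X × Y, ℝ))).SeparatesPoints := by
  rintro z w hzw
  have dist_ne : dist z.1 w.1 ≠ 0 ∨ dist z.2 w.2 ≠ 0 := by
    simpa only [dist_ne_zero, Ne, Prod.ext_iff, not_and_or] using hzw
  let d₁ : C(X, ℝ) := ⟨(dist · w.1), by fun_prop⟩
  let d₂ : C(Y, ℝ) := ⟨(dist · w.2), by fun_prop⟩
  rcases dist_ne with h | h
  · refine ⟨_, ⟨d₁.comp fst * (1 : C(Y, ℝ)).comp snd,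
      Algebra.subset_adjoin ⟨_, _, rfl⟩, rfl⟩, ?_⟩
    simpa [d₁] using h
  · refine ⟨_, ⟨(1 : C(X, ℝ)).comp fst * d₂.comp snd,
      Algebra.subset_adjoin ⟨_, _, rfl⟩, rfl⟩, ?_⟩
    simpa [d₂] using h

/-- The span of the elementary tensors is a subalgebra, dense by Stone–Weierstrass. -/
theorem submodule_eq_top_of_tensor_mem [CompactSpace X] [CompactSpace Y]
    (S : Submodule ℝ C(X × Y, ℝ)) (hS : IsClosed (S : Set C(X × Y, ℝ)))
    (h : ∀ (f : C(X, ℝ)) (g : C(Y, ℝ)), f.comp fst * g.comp snd ∈ S) : S = ⊤ := by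
  set A := Algebra.adjoin ℝ (tensorSubmonoid X Y : Set C(X × Y, ℝ))
  have hAS : (A : Set C(X × Y, ℝ)) ⊆ S := by
    have hspan : Subalgebra.toSubmodule A = Submodule.span ℝ (tensorSubmonoid X Y) := by
      rw [Algebra.adjoin_eq_span, Submonoid.closure_eq]
    intro F hF
    have : F ∈ Submodule.span ℝ (tensorSubmonoid X Y : Set C(X × Y, ℝ)) := hspan ▸ hF
    refine Submodule.span_le.2 ?_ this
    rintro _ ⟨f, g, rfl⟩
    exact h f g
  refine eq_top_iff.2 fun F _ => hS.closure_subset_iff.2 hAS ?_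
  have hdense := subalgebra_topologicalClosure_eq_top_of_separatesPoints A
    separatesPoints_adjoin_tensorSubmonoid
  rw [← Subalgebra.topologicalClosure_coe, hdense]
  trivial

end Tensor

section Koopman

variable {Z W : Type*} [MetricSpace Z] [CompactSpace Z] [MeasurableSpace Z] [BorelSpace Z]
  [TopologicalSpace W]

noncomputable def toLpCompRight (p : ℝ≥0∞) [Fact (1 ≤ p)] (ν : Measure Z) [IsFiniteMeasure ν]
    (φ : C(Z, W)) : C(W, ℝ) →ₗ[ℝ] Lp ℝ p ν :=
  (toLp p ν ℝ).toLinearMap ∘ₗ (compRightAlgHom ℝ ℝ φ).toLinearMap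

theorem toLpCompRight_apply (p : ℝ≥0∞) [Fact (1 ≤ p)] (ν : Measure Z) [IsFiniteMeasure ν]
    (φ : C(Z, W)) (F : C(W, ℝ)) : toLpCompRight p ν φ F = toLp p ν ℝ (F.comp φ) := rfl

theorem norm_toLp_le_of_isProbabilityMeasure (p : ℝ≥0∞) [Fact (1 ≤ p)] (ν : Measure Z)
    [IsProbabilityMeasure ν] (f : C(Z, ℝ)) : ‖toLp (E := ℝ) p ν ℝ f‖ ≤ ‖f‖ := by
  have hnorm : ‖(toLp p ν ℝ : C(Z, ℝ) →L[ℝ] Lp ℝ p ν)‖ ≤ 1 := by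
    simpa [measureUnivNNReal] using toLp_norm_le (E := ℝ) (p := p) ν (𝕜 := ℝ)
  calc _ ≤ _ := (toLp (E := ℝ) p ν ℝ).le_opNorm f
    _ ≤ 1 * ‖f‖ := by gcongr
    _ = ‖f‖ := one_mul _

theorem lipschitzWith_toLpCompRight [CompactSpace W] (p : ℝ≥0∞) [Fact (1 ≤ p)] (ν : Measure Z)
    [IsProbabilityMeasure ν] (φ : C(Z, W)) : LipschitzWith 1 (toLpCompRight p ν φ) := by
  refine LipschitzWith.of_dist_le_mul fun F F' => ?_
  rw [NNReal.coe_one, one_mul, dist_eq_norm, dist_eq_norm, toLpCompRight_apply,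
    toLpCompRight_apply, ← map_sub, ← sub_comp]
  exact (norm_toLp_le_of_isProbabilityMeasure p ν _).trans <|
    (norm_le _ (norm_nonneg _)).2 fun z => (F - F').norm_coe_le_norm (φ z)

end Koopman

theorem toLp_mul_comp_fst_snd {X Y : Type*} [MetricSpace X] [CompactSpace X]
    [MeasurableSpace X] [BorelSpace X] [MetricSpace Y] [CompactSpace Y] [MeasurableSpace Y]
    [BorelSpace Y] {p : ℝ≥0∞} [Fact (1 ≤ p)] (hp : p ≠ ∞) (μ : Measure X) (ν : Measure Y)
    [IsFiniteMeasure μ] [IsFiniteMeasure ν] (f : C(X, ℝ)) (g : C(Y, ℝ)) :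
    toLp p (μ.prod ν) ℝ (f.comp fst * g.comp snd) =
      Lp.mulProd hp (toLp p μ ℝ f) (toLp p ν ℝ g) := by
  refine Lp.ext <| (coeFn_toLp _ _).trans <| EventuallyEq.symm ?_
  filter_upwards [Lp.coeFn_mulProd hp (toLp p μ ℝ f) (toLp p ν ℝ g),
    Measure.quasiMeasurePreserving_fst.ae_eq_comp (coeFn_toLp (p := p) (𝕜 := ℝ) μ f),
    Measure.quasiMeasurePreserving_snd.ae_eq_comp (coeFn_toLp (p := p) (𝕜 := ℝ) ν g)]
    with z hz hz₁ hz₂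
  simp only [Function.comp_apply] at hz₁ hz₂
  rw [hz, hz₁, hz₂]
  rfl

end ContinuousMap

/-- If `μ` has discrete spectrum, then `μ × μ` has discrete spectrum for the
diagonal action of `G` on `X × X`. -/
theorem discreteSpectrum_prod
    {G X : Type*} [Group G] [TopologicalSpace G]
    [MetricSpace X] [CompactSpace X] [MeasurableSpace X] [BorelSpace X]
    [MulAction G X] [ContinuousSMul G X]
    (μ : Measure X) [IsProbabilityMeasure μ]
    (h : HasDiscreteSpectrum G μ) :
    ∀ F : C(X × X, ℝ),
      IsCompact (closure
        {H : Lp ℝ 2 (μ.prod μ) | ∃ g : G,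
          H = ContinuousMap.toLp 2 (μ.prod μ) ℝ
            (F.comp ⟨fun p => (g • p.1, g • p.2),
              by exact ((continuous_const_smul g).comp continuous_fst).prodMk
                  ((continuous_const_smul g).comp continuous_snd)⟩)}) := by
  let σ : G → C(X, X) := fun g => ⟨(g • ·), continuous_const_smul g⟩
  let T : G → C(X × X, ℝ) →ₗ[ℝ] Lp ℝ 2 (μ.prod μ) :=
    fun g => ContinuousMap.toLpCompRight 2 (μ.prod μ) ((σ g).prodMap (σ g))
  have hT : Equicontinuous fun g => ⇑(T g) :=
    (LipschitzWith.uniformEquicontinuous _ 1 fun g =>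
      ContinuousMap.lipschitzWith_toLpCompRight _ _ _).equicontinuous
  have h2 : (2 : ℝ≥0∞) ≠ ∞ := ofNat_ne_top
  have htensor (f₁ f₂ : C(X, ℝ)) :
      f₁.comp ContinuousMap.fst * f₂.comp ContinuousMap.snd ∈ relCompactOrbits T := by
    refine (((h f₁).prod (h f₂)).image
      (Lp.mulProd (𝕜 := ℝ) (μ := μ) (ν := μ) h2).continuous₂).closure_of_subset ?_
    rintro _ ⟨g, rfl⟩
    refine ⟨(ContinuousMap.toLp 2 μ ℝ (f₁.comp (σ g)),
      ContinuousMap.toLp 2 μ ℝ (f₂.comp (σ g))),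
      ⟨subset_closure ⟨g, rfl⟩, subset_closure ⟨g, rfl⟩⟩, ?_⟩
    exact (ContinuousMap.toLp_mul_comp_fst_snd h2 μ μ _ _).symm
  intro F
  have hF : F ∈ relCompactOrbits T := by
    rw [ContinuousMap.submodule_eq_top_of_tensor_mem _
      (isClosed_setOf_isCompact_closure_range hT) htensor]
    trivial
  convert mem_relCompactOrbits.1 hF using 2
  ext H
  exact exists_congr fun g => eq_comm
end

section
/- Let X be a compact metric space, G a locally compact group acting continuously on X, and μ a Borel probability measure with discrete spectrum. Then μ has bounded measure-max-mean-complexity: for every ε > 0 there exists K(ε) > 0 such that for every Borel probability measure ρ on G, S_ρ(X, μ, G, ε) < K(ε), where S_ρ is the minimal number of ρ-mean-metric ε-balls needed to cover X up to μ-measure 1−ε. -/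
/-!
Fix a finite `η`-net `z` of `X`. Discrete spectrum makes the orbit `g ↦ (d(g ·, z_j))_j` totally
bounded in `L²(μ)^k`, so there are finitely many `s_i ∈ G` and a measurable choice `g ↦ s_{p g}`
such that every `d(g ·, z_j)` is `L²`-close to `d(s_{p g} ·, z_j)`. Comparing distances to the net
gives `d(gx, gy) ≤ max_i d(s_i x, s_i y) + η + a(x, g) + a(y, g)`, where the error `a(·, g)` has
small `μ`-integral for every `g`. The pseudometric `max_i d(s_i x, s_i y)` is continuous and does
not depend on `ρ`, so `X` splits into a fixed number `K` of cells of small diameter for it. By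
Fubini and Markov, the points `x` with small `∫ a(x, g) dρ(g)` have measure close to `1`, and any
two of them in the same cell are `d_ρ`-close.
-/

open MeasureTheory Topology

open Set Function
open scoped ENNReal

theorem exists_measurable_mem_of_forall_exists_mem {α ι : Type*} [MeasurableSpace α]
    [Nonempty α] [MeasurableSpace ι] [Countable ι] {C : ι → Set α}
    (hC : ∀ i, MeasurableSet (C i)) (hcov : ∀ a, ∃ i, a ∈ C i) :
    ∃ p : α → ι, Measurable p ∧ ∀ a, a ∈ C (p a) := by
  classical
  have : Nonempty ι := (hcov (Classical.arbitrary α)).nonempty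
  obtain ⟨e, he⟩ := exists_surjective_nat ι
  have hcov' (a : α) : ∃ n, a ∈ C (e n) := by
    obtain ⟨i, hi⟩ := hcov a
    obtain ⟨n, rfl⟩ := he i
    exact ⟨n, hi⟩
  refine ⟨fun a => e (Nat.find (hcov' a)), ?_, fun a => Nat.find_spec (hcov' a)⟩
  exact Measurable.find (p := fun n a => a ∈ C (e n)) (fun n => measurable_const)
    (fun n => hC (e n)) hcov'

theorem Measurable.apply_index {α ι γ : Type*} [MeasurableSpace α] [MeasurableSpace ι]
    [MeasurableSpace γ] [Countable ι] [MeasurableSingletonClass ι] {F : ι → α → γ}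
    (hF : ∀ i, Measurable (F i)) {p : α → ι} (hp : Measurable p) :
    Measurable fun a => F (p a) a :=
  (measurable_from_prod_countable_left (f := fun q : α × ι => F q.2 q.1) hF).comp
    (measurable_id.prodMk hp)

theorem exists_fin_dist_lt_of_totallyBounded_range {α M : Type*} [PseudoMetricSpace M]
    {f : α → M} (hf : TotallyBounded (range f)) {r : ℝ} (hr : 0 < r) :
    ∃ (n : ℕ) (e : Fin n → α), ∀ a, ∃ i, dist (f a) (f (e i)) < r := by
  obtain ⟨t, htf, ht_fin, hcov⟩ := Metric.finite_approx_of_totallyBounded hf r hr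
  obtain ⟨n, y, -, rfl⟩ := ht_fin.fin_param
  choose e he using fun i => htf (mem_range_self i)
  refine ⟨n, e, fun a => ?_⟩
  obtain ⟨_, ⟨i, rfl⟩, hi⟩ := mem_iUnion₂.1 (hcov (mem_range_self a))
  exact ⟨i, (he i).symm ▸ hi⟩

theorem dist_le_of_forall_exists_dist_lt {M ι : Type*} [PseudoMetricSpace M] [Fintype ι]
    {z : ι → M} {η : ℝ} (hz : ∀ x, ∃ j, dist x (z j) < η) (u v u' v' : M) :
    dist u v ≤ dist u' v' + 2 * η + ∑ j, |dist u (z j) - dist u' (z j)|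
      + ∑ j, |dist v (z j) - dist v' (z j)| := by
  -- Triangle inequality through a net point near `v`; then trade `u, v` for `u', v'`.
  obtain ⟨j, hj⟩ := hz v
  have hu := Finset.single_le_sum (f := fun j => |dist u (z j) - dist u' (z j)|)
    (fun _ _ => abs_nonneg _) (Finset.mem_univ j)
  have hv := Finset.single_le_sum (f := fun j => |dist v (z j) - dist v' (z j)|)
    (fun _ _ => abs_nonneg _) (Finset.mem_univ j)
  linarith [dist_triangle_right u v (z j), abs_dist_sub_le u' v' (z j),
    le_abs_self (dist u (z j) - dist u' (z j)), neg_abs_le (dist v (z j) - dist v' (z j)),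
    le_abs_self (dist u' (z j) - dist v' (z j))]

theorem lintegral_ofReal_abs_sub_le_edist_toLp {X : Type*} [TopologicalSpace X] [CompactSpace X]
    [MeasurableSpace X] [BorelSpace X] (μ : Measure X) [IsProbabilityMeasure μ]
    (u w : C(X, ℝ)) :
    ∫⁻ x, ENNReal.ofReal |u x - w x| ∂μ ≤
      edist (ContinuousMap.toLp 2 μ ℝ u) (ContinuousMap.toLp 2 μ ℝ w) := by
  have hL1 : ∫⁻ x, ENNReal.ofReal |u x - w x| ∂μ = eLpNorm (⇑u - ⇑w) 1 μ := by
    simp only [eLpNorm_one_eq_lintegral_enorm, Pi.sub_apply, Real.enorm_eq_ofReal_abs]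
  have hL2 : edist (ContinuousMap.toLp 2 μ ℝ u) (ContinuousMap.toLp 2 μ ℝ w)
      = eLpNorm (⇑u - ⇑w) 2 μ := by
    rw [Lp.edist_def]
    exact eLpNorm_congr_ae ((ContinuousMap.coeFn_toLp μ u).sub (ContinuousMap.coeFn_toLp μ w))
  rw [hL1, hL2]
  exact eLpNorm_le_eLpNorm_of_exponent_le (by norm_num) (u - w).continuous.aestronglyMeasurable

theorem lintegral_ofReal_sum_abs_sub_le_card_mul_edist_toLp {X ι : Type*} [TopologicalSpace X]
    [CompactSpace X] [MeasurableSpace X] [BorelSpace X] [Fintype ι]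
    (μ : Measure X) [IsProbabilityMeasure μ]
    (u w : ι → C(X, ℝ)) :
    ∫⁻ x, ENNReal.ofReal (∑ j, |u j x - w j x|) ∂μ ≤ Fintype.card ι *
      edist (fun j => ContinuousMap.toLp 2 μ ℝ (u j))
        (fun j => ContinuousMap.toLp 2 μ ℝ (w j)) := by
  calc ∫⁻ x, ENNReal.ofReal (∑ j, |u j x - w j x|) ∂μ
      = ∑ j, ∫⁻ x, ENNReal.ofReal |u j x - w j x| ∂μ := by
        simp_rw [ENNReal.ofReal_sum_of_nonneg fun j _ => abs_nonneg (u j _ - w j _)]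
        exact lintegral_finsetSum _ fun j _ =>
          ((u j - w j).continuous.abs.measurable.ennreal_ofReal)
    _ ≤ ∑ _j : ι, edist (fun j => ContinuousMap.toLp 2 μ ℝ (u j))
          (fun j => ContinuousMap.toLp 2 μ ℝ (w j)) :=
        Finset.sum_le_sum fun j _ =>
          (lintegral_ofReal_abs_sub_le_edist_toLp μ (u j) (w j)).trans (edist_le_pi_edist _ _ j)
    _ = _ := by simp

theorem meas_ge_lintegral_le_div {X Ω : Type*} [MeasurableSpace X] [MeasurableSpace Ω]
    {μ : Measure X} [SFinite μ] {ρ : Measure Ω} [IsProbabilityMeasure ρ]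
    {a : X → Ω → ℝ≥0∞} (ha : Measurable (uncurry a)) {θ : ℝ≥0∞}
    (hθ : ∀ ω, ∫⁻ x, a x ω ∂μ ≤ θ) {t : ℝ≥0∞} (ht0 : t ≠ 0) (ht : t ≠ ∞) :
    μ {x | t ≤ ∫⁻ ω, a x ω ∂ρ} ≤ θ / t := by
  refine (meas_ge_le_lintegral_div ha.lintegral_prod_right'.aemeasurable ht0 ht).trans
    (ENNReal.div_le_div_right ?_ t)
  calc ∫⁻ x, ∫⁻ ω, a x ω ∂ρ ∂μ
      = ∫⁻ ω, ∫⁻ x, a x ω ∂μ ∂ρ := lintegral_lintegral_swap ha.aemeasurable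
    _ ≤ ∫⁻ _, θ ∂ρ := lintegral_mono hθ
    _ = θ := by simp

section Orbit

variable {G X : Type*} [Group G] [TopologicalSpace G] [MetricSpace X] [CompactSpace X]
  [MeasurableSpace X] [BorelSpace X] [MulAction G X] [ContinuousSMul G X]
  (μ : Measure X) [IsProbabilityMeasure μ]

noncomputable def orbitLp (f : C(X, ℝ)) (g : G) : Lp ℝ 2 μ :=
  ContinuousMap.toLp 2 μ ℝ (f.comp ⟨fun x => g • x, continuous_const_smul g⟩)

theorem continuous_orbitLp (f : C(X, ℝ)) : Continuous (orbitLp (G := G) μ f) := by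
  have hcomp : Continuous fun g : G =>
      f.comp (ContinuousMap.curry ⟨fun q : G × X => q.1 • q.2, continuous_smul⟩ g) :=
    (ContinuousMap.continuous_postcomp f).comp (ContinuousMap.curry _).continuous
  exact (ContinuousMap.toLp 2 μ ℝ).continuous.comp hcomp

theorem HasDiscreteSpectrum.totallyBounded_range_orbitLp (hds : HasDiscreteSpectrum G μ)
    {ι : Type*} (f : ι → C(X, ℝ)) :
    TotallyBounded (range fun (g : G) i => orbitLp μ (f i) g) := by
  refine (isCompact_univ_pi fun i => hds (f i)).totallyBounded.subset ?_
  rintro _ ⟨g, rfl⟩ i -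
  exact subset_closure ⟨g, rfl⟩

theorem HasDiscreteSpectrum.exists_measurable_approx [MeasurableSpace G]
    [OpensMeasurableSpace G] (hds : HasDiscreteSpectrum G μ) {ι : Type*} [Fintype ι]
    (f : ι → C(X, ℝ)) {r : ℝ} (hr : 0 < r) :
    ∃ (m : ℕ) (s : Fin m → G) (p : G → Fin m), Measurable p ∧
      ∀ g, dist (fun i => orbitLp μ (f i) g) (fun i => orbitLp μ (f i) (s (p g))) < r := by
  obtain ⟨m, s, hs⟩ :=
    exists_fin_dist_lt_of_totallyBounded_range (hds.totallyBounded_range_orbitLp μ f) hr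
  have hΦ : Continuous fun (g : G) i => orbitLp μ (f i) g :=
    continuous_pi fun i => continuous_orbitLp μ (f i)
  obtain ⟨p, hp_meas, hp⟩ := exists_measurable_mem_of_forall_exists_mem
    (fun k => (isOpen_lt (hΦ.dist continuous_const) continuous_const).measurableSet) hs
  exact ⟨m, s, p, hp_meas, hp⟩

end Orbit

theorem HasDiscreteSpectrum.exists_dominated {G X : Type*} [Group G] [TopologicalSpace G]
    [MeasurableSpace G] [OpensMeasurableSpace G] [MetricSpace X] [CompactSpace X]
    [MeasurableSpace X] [BorelSpace X] [MulAction G X] [ContinuousSMul G X]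
    {μ : Measure X} [IsProbabilityMeasure μ] (hds : HasDiscreteSpectrum G μ)
    {η θ : ℝ} (hη : 0 < η) (hθ : 0 < θ) :
    ∃ (m : ℕ) (s : Fin m → G) (a : X → G → ℝ≥0∞), Measurable (uncurry a) ∧
      (∀ g, ∫⁻ x, a x g ∂μ ≤ ENNReal.ofReal θ) ∧
      ∀ g x y, ENNReal.ofReal (dist (g • x) (g • y)) ≤
        ENNReal.ofReal (dist (fun i => s i • x) (fun i => s i • y) + η) + a x g + a y g := by
  have : Nonempty X := nonempty_of_isProbabilityMeasure μ
  obtain ⟨k, z, hz⟩ : ∃ (k : ℕ) (z : Fin k → X), ∀ x, ∃ j, dist x (z j) < η / 2 :=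
    exists_fin_dist_lt_of_totallyBounded_range (f := id)
      (range_id ▸ (isCompact_univ (X := X)).totallyBounded) (half_pos hη)
  have hk : 0 < k := Fin.pos_iff_nonempty.2 ⟨(hz (Classical.arbitrary X)).choose⟩
  let f (j : Fin k) : C(X, ℝ) := ⟨fun x => dist x (z j), by fun_prop⟩
  obtain ⟨m, s, p, hp_meas, hp⟩ :=
    hds.exists_measurable_approx μ f (div_pos hθ (Nat.cast_pos.2 hk))
  refine ⟨m, s,
    fun x g => ENNReal.ofReal (∑ j, |dist (g • x) (z j) - dist (s (p g) • x) (z j)|),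
    ?_, fun g => ?_, fun g x y => ?_⟩
  · exact Measurable.apply_index
      (F := fun i (q : X × G) =>
        ENNReal.ofReal (∑ j, |dist (q.2 • q.1) (z j) - dist (s i • q.1) (z j)|))
      (fun i => by fun_prop) (hp_meas.comp measurable_snd)
  · calc ∫⁻ x, ENNReal.ofReal (∑ j, |dist (g • x) (z j) - dist (s (p g) • x) (z j)|) ∂μ
        ≤ k * edist (fun j => orbitLp μ (f j) g) (fun j => orbitLp μ (f j) (s (p g))) := by
          have := lintegral_ofReal_sum_abs_sub_le_card_mul_edist_toLp μ
            (fun j => (f j).comp ⟨fun x => g • x, continuous_const_smul g⟩)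
            (fun j => (f j).comp ⟨fun x => s (p g) • x, continuous_const_smul (s (p g))⟩)
          rwa [Fintype.card_fin] at this
      _ ≤ k * ENNReal.ofReal (θ / k) := by
          rw [edist_dist]
          gcongr
          exact (hp g).le
      _ = ENNReal.ofReal θ := by
          rw [← ENNReal.ofReal_natCast, ← ENNReal.ofReal_mul (by positivity),
            mul_div_cancel₀ _ (by positivity)]
  · have hfar :=
      dist_le_of_forall_exists_dist_lt hz (g • x) (g • y) (s (p g) • x) (s (p g) • y)
    have hnear : dist (s (p g) • x) (s (p g) • y) ≤
        dist (fun i => s i • x) (fun i => s i • y) :=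
      dist_le_pi_dist (fun i => s i • x) (fun i => s i • y) (p g)
    rw [← ENNReal.ofReal_add (by positivity) (by positivity),
      ← ENNReal.ofReal_add (by positivity) (by positivity)]
    exact ENNReal.ofReal_le_ofReal (by linarith)

section MeanDistance

variable {G X : Type*} [TopologicalSpace G] [MeasurableSpace G] [OpensMeasurableSpace G]
  [MetricSpace X] [MeasurableSpace X] [SMul G X] [ContinuousSMul G X]

theorem integral_dist_smul_le_of_dominated {ρ : Measure G} [IsProbabilityMeasure ρ]
    {D : X → X → ℝ} {a : X → G → ℝ≥0∞} (ha : Measurable (uncurry a)) {η r t : ℝ}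
    (hr : 0 ≤ r) (hη : 0 ≤ η) (ht : 0 ≤ t)
    (hdom : ∀ g x y, ENNReal.ofReal (dist (g • x) (g • y)) ≤
      ENNReal.ofReal (D x y + η) + a x g + a y g)
    {x y : X} (hxy : D x y ≤ r) (hx : ∫⁻ g, a x g ∂ρ ≤ ENNReal.ofReal t)
    (hy : ∫⁻ g, a y g ∂ρ ≤ ENNReal.ofReal t) :
    ∫ g, dist (g • x) (g • y) ∂ρ ≤ r + η + 2 * t := by
  have hmeas (w : X) : Measurable (a w) := ha.comp measurable_prodMk_left
  have hlin : ∫⁻ g, ENNReal.ofReal (dist (g • x) (g • y)) ∂ρ ≤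
      ENNReal.ofReal (r + η + 2 * t) := by
    calc ∫⁻ g, ENNReal.ofReal (dist (g • x) (g • y)) ∂ρ
        ≤ ∫⁻ g, ENNReal.ofReal (D x y + η) + a x g + a y g ∂ρ := lintegral_mono (hdom · x y)
      _ = ENNReal.ofReal (D x y + η) + ∫⁻ g, a x g ∂ρ + ∫⁻ g, a y g ∂ρ := by
        rw [lintegral_add_right _ (hmeas y), lintegral_add_left measurable_const, lintegral_const,
          measure_univ, mul_one]
      _ ≤ ENNReal.ofReal (r + η) + ENNReal.ofReal t + ENNReal.ofReal t := by
        gcongr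
      _ = ENNReal.ofReal (r + η + 2 * t) := by
        rw [← ENNReal.ofReal_add (by positivity) ht, ← ENNReal.ofReal_add (by positivity) ht]
        ring_nf
  rw [integral_eq_lintegral_of_nonneg_ae (.of_forall fun _ => dist_nonneg)
    (by fun_prop : Continuous fun g : G => dist (g • x) (g • y)).aestronglyMeasurable]
  exact ENNReal.toReal_le_of_le_ofReal (by positivity) hlin

theorem exists_mean_cover_of_dominated {M : Type*} [PseudoMetricSpace M] [CompactSpace X]
    (μ : Measure X) [IsProbabilityMeasure μ] {ε : ℝ} (hε : 0 < ε) (hε1 : ε ≤ 1)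
    {Ψ : X → M} (hΨ : Continuous Ψ) {a : X → G → ℝ≥0∞} (ha : Measurable (uncurry a))
    (hint : ∀ g, ∫⁻ x, a x g ∂μ ≤ ENNReal.ofReal (ε ^ 2 / 16))
    (hdom : ∀ g x y, ENNReal.ofReal (dist (g • x) (g • y)) ≤
      ENNReal.ofReal (dist (Ψ x) (Ψ y) + ε / 4) + a x g + a y g) :
    ∃ K : ℕ, ∀ ρ : Measure G, IsProbabilityMeasure ρ → ∃ c : Fin K → X,
      ENNReal.ofReal (1 - ε) < μ {y | ∃ k, ∫ g, dist (g • c k) (g • y) ∂ρ < ε} := by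
  have : Nonempty X := nonempty_of_isProbabilityMeasure μ
  obtain ⟨K, q, hq⟩ := exists_fin_dist_lt_of_totallyBounded_range
    (isCompact_range hΨ).totallyBounded (by positivity : 0 < ε / 8)
  refine ⟨K, fun ρ hρ => ?_⟩
  set bad := {x | ENNReal.ofReal (ε / 8) ≤ ∫⁻ g, a x g ∂ρ}
  have hbad_meas : MeasurableSet bad :=
    measurableSet_le measurable_const ha.lintegral_prod_right'
  have hbad : μ bad ≤ ENNReal.ofReal (ε / 2) := by
    refine (meas_ge_lintegral_le_div ha hint (ENNReal.ofReal_pos.2 (by positivity)).ne'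
      ENNReal.ofReal_ne_top).trans_eq ?_
    rw [← ENNReal.ofReal_div_of_pos (by positivity)]
    congr 1
    field_simp
    ring
  -- `c k` is a point of the `k`-th cell outside `bad`, whenever the cell has one.
  let c (k : Fin K) : X :=
    Classical.epsilon fun x => dist (Ψ x) (Ψ (q k)) < ε / 8 ∧ x ∉ bad
  refine ⟨c, ?_⟩
  have hgood : badᶜ ⊆ {y | ∃ k, ∫ g, dist (g • c k) (g • y) ∂ρ < ε} := by
    intro y (hy : ¬ENNReal.ofReal (ε / 8) ≤ ∫⁻ g, a y g ∂ρ)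
    obtain ⟨k, hk⟩ := hq y
    obtain ⟨hck, hc_good⟩ : dist (Ψ (c k)) (Ψ (q k)) < ε / 8 ∧ c k ∉ bad :=
      Classical.epsilon_spec (p := fun x => dist (Ψ x) (Ψ (q k)) < ε / 8 ∧ x ∉ bad)
        ⟨y, hk, hy⟩
    refine ⟨k, ?_⟩
    have hdist : dist (Ψ (c k)) (Ψ y) ≤ ε / 4 := by
      linarith [dist_triangle_right (Ψ (c k)) (Ψ y) (Ψ (q k))]
    have := integral_dist_smul_le_of_dominated ha (by positivity) (by positivity) (by positivity)
      hdom hdist (not_le.1 hc_good).le (not_le.1 hy).le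
    linarith
  calc ENNReal.ofReal (1 - ε) < 1 - ENNReal.ofReal (ε / 2) := by
        rw [← ENNReal.ofReal_one, ← ENNReal.ofReal_sub _ (by positivity),
          ENNReal.ofReal_lt_ofReal_iff (by linarith)]
        linarith
    _ ≤ μ badᶜ := by
        rw [prob_compl_eq_one_sub hbad_meas]
        gcongr
    _ ≤ _ := measure_mono hgood

end MeanDistance

theorem bounded_measure_max_mean_complexity_of_discreteSpectrum_general
    {G X : Type*} [Group G] [TopologicalSpace G]
    [MeasurableSpace G] [BorelSpace G]
    [MetricSpace X] [CompactSpace X] [MeasurableSpace X] [BorelSpace X]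
    [MulAction G X] [ContinuousSMul G X]
    (μ : Measure X) [IsProbabilityMeasure μ]
    (hds : HasDiscreteSpectrum G μ) :
    ∀ ε : ℝ, 0 < ε → ∃ K : ℕ, ∀ ρ : Measure G, IsProbabilityMeasure ρ →
      ∃ c : Fin K → X,
        μ {y : X | ∃ k, (∫ g, dist (g • c k) (g • y) ∂ρ) < ε}
          > ENNReal.ofReal (1 - ε) := by
  intro ε hε
  have hε₀ : 0 < min ε 1 := lt_min hε one_pos
  obtain ⟨m, s, a, ha, hint, hdom⟩ :=
    hds.exists_dominated (η := min ε 1 / 4) (θ := min ε 1 ^ 2 / 16) (by positivity)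
      (by positivity)
  obtain ⟨K, hK⟩ := exists_mean_cover_of_dominated μ hε₀ (min_le_right ε 1)
    (Ψ := fun x i => s i • x) (by fun_prop) ha hint hdom
  refine ⟨K, fun ρ hρ => ?_⟩
  obtain ⟨c, hc⟩ := hK ρ hρ
  refine ⟨c, lt_of_le_of_lt ?_ (hc.trans_le (measure_mono ?_))⟩
  · exact ENNReal.ofReal_le_ofReal (by linarith [min_le_left ε 1])
  · exact fun y ⟨k, hk⟩ => ⟨k, hk.trans_le (min_le_left ε 1)⟩

/-- If `μ` has discrete spectrum then it has bounded measure-max-mean-complexity: for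
every `ε > 0` there is `K` such that for every Borel probability measure `ρ` on `G`, `X`
can be `(1−ε)`-covered in `μ`-measure by `K` balls of `d_ρ`-radius `ε`, where
`d_ρ(x,y) = ∫_G d(gx,gy) dρ(g)`. -/
theorem bounded_measure_max_mean_complexity_of_discreteSpectrum
    {G X : Type*} [Group G] [TopologicalSpace G] [LocallyCompactSpace G]
    [MeasurableSpace G] [BorelSpace G]
    [MetricSpace X] [CompactSpace X] [MeasurableSpace X] [BorelSpace X]
    [MulAction G X] [ContinuousSMul G X]
    (μ : Measure X) [IsProbabilityMeasure μ]
    (hds : HasDiscreteSpectrum G μ) :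
    ∀ ε : ℝ, 0 < ε → ∃ K : ℕ, ∀ ρ : Measure G, IsProbabilityMeasure ρ →
      ∃ c : Fin K → X,
        μ {y : X | ∃ k, (∫ g, dist (g • c k) (g • y) ∂ρ) < ε}
          > ENNReal.ofReal (1 - ε) :=
  bounded_measure_max_mean_complexity_of_discreteSpectrum_general μ hds
end

section
/- Let G be a locally compact amenable group with Haar measure m_G and Følner sequence {F_n}, acting continuously on a compact metric space X, and let μ be a G-invariant Borel probability measure. If μ has bounded mean-complexity along {F_n} (for every ε > 0 there is K(ε) with S_{m_G|_{F_n}}(X,μ,G,ε) < K(ε) for all n), then μ has bounded max-mean-complexity: for every ε > 0, S_{ρ_E}(X,μ,G,2√ε) ≤ K(ε) for every nonempty finite subset E of G. -/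
/-!
Fix `n` so that every `h ∈ E` moves `F n` by at most `ε · m (F n)` in measure, and take the
centres `c k` given for `F n`. Translating by `h ∈ E` changes `∫_{F n} dist (g • c k) (g • y)`
by at most `ε · m (F n)`, so `min_k d_{ρ_E} (g • c k, g • y)` has `F n`-average at most `2ε` at
every `y` that is `ε`-close to some `c k`, and at most `1` elsewhere; its mean over `F n × X`
is therefore at most `3ε`. By Fubini some `g₀` does at least as well, so by invariance of `μ`
the centres `g₀ • c k` satisfy `∫ min_k d_{ρ_E} (g₀ • c k, ·) dμ ≤ 3ε`, and Markov's inequality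
at level `2√ε` gives the cover.
-/

open MeasureTheory Pointwise symmDiff Filter
open scoped ENNReal

section MeanDist

variable {G X : Type*} [PseudoMetricSpace X] [SMul G X] {ι : Type*} [Fintype ι] [Nonempty ι]

noncomputable def meanDist (E : Finset G) (x y : X) : ℝ :=
  (1 / (E.card : ℝ)) * ∑ g ∈ E, dist (g • x) (g • y)

noncomputable def minMeanDist (E : Finset G) (c : ι → X) (y : X) : ℝ :=
  Finset.univ.inf' Finset.univ_nonempty fun k => meanDist E (c k) y

variable {E : Finset G}

lemma meanDist_nonneg (x y : X) : 0 ≤ meanDist E x y := by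
  unfold meanDist; positivity

lemma meanDist_le_of_dist_le {C : ℝ} (hC : ∀ a b : X, dist a b ≤ C) (x y : X) :
    meanDist E x y ≤ C := by
  rcases E.eq_empty_or_nonempty with rfl | hE
  · simpa [meanDist] using (dist_self x).symm.trans_le (hC x x)
  · rw [meanDist, one_div, inv_mul_le_iff₀ (by exact_mod_cast hE.card_pos), ← nsmul_eq_mul]
    exact Finset.sum_le_card_nsmul _ _ _ fun g _ => hC _ _

lemma minMeanDist_le (c : ι → X) (y : X) (k : ι) : minMeanDist E c y ≤ meanDist E (c k) y :=
  Finset.inf'_le _ (Finset.mem_univ k)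

lemma minMeanDist_nonneg (c : ι → X) (y : X) : 0 ≤ minMeanDist E c y :=
  Finset.le_inf' _ _ fun _ _ => meanDist_nonneg _ _

lemma minMeanDist_le_of_dist_le {C : ℝ} (hC : ∀ a b : X, dist a b ≤ C) (c : ι → X) (y : X) :
    minMeanDist E c y ≤ C :=
  (minMeanDist_le c y (Classical.arbitrary ι)).trans (meanDist_le_of_dist_le hC _ _)

lemma exists_meanDist_lt_of_minMeanDist_lt {c : ι → X} {y : X} {t : ℝ}
    (h : minMeanDist E c y < t) : ∃ k, meanDist E (c k) y < t := by
  obtain ⟨k, -, hk⟩ := (Finset.inf'_lt_iff _).1 h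
  exact ⟨k, hk⟩

variable [ContinuousConstSMul G X] {α : Type*} [TopologicalSpace α]

lemma Continuous.meanDist {f g : α → X} (hf : Continuous f) (hg : Continuous g) :
    Continuous fun a => meanDist E (f a) (g a) :=
  continuous_const.mul <| continuous_finsetSum _ fun _ _ =>
    (hf.const_smul _).dist (hg.const_smul _)

lemma Continuous.minMeanDist {c : ι → α → X} {f : α → X} (hc : ∀ k, Continuous (c k))
    (hf : Continuous f) : Continuous fun a => minMeanDist E (fun k => c k a) (f a) :=
  Continuous.finset_inf'_apply _ fun k _ => (hc k).meanDist hf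

end MeanDist

section Translation

variable {G : Type*} [Group G] [MeasurableSpace G] [MeasurableMul G] {m : Measure G}
  [m.IsMulLeftInvariant] {F : Set G} {f : G → ℝ}

lemma setIntegral_comp_mul_left (h : G) :
    ∫ g in F, f (h * g) ∂m = ∫ g in h • F, f g ∂m := by
  have hpre : (h * ·) ⁻¹' (h • F) = F := by
    ext g
    simp [Set.mem_smul_set_iff_inv_smul_mem]
  simpa only [hpre] using (measurePreserving_mul_left m h).setIntegral_preimage_emb
    (measurableEmbedding_mulLeft h) f (h • F)

lemma setIntegral_comp_mul_left_le (hF : m F ≠ ∞) (hf : Measurable f) (hf0 : ∀ g, 0 ≤ f g)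
    (hf1 : ∀ g, f g ≤ 1) (h : G) :
    ∫ g in F, f (h * g) ∂m ≤ ∫ g in F, f g ∂m + m.real ((h • F) ∆ F) := by
  have hhF : m (h • F) ≠ ∞ := by rwa [measure_smul]
  have hdiff : m (h • F \ F) < ∞ := (measure_mono Set.sdiff_subset).trans_lt hhF.lt_top
  have hint : ∀ s, m s < ∞ → IntegrableOn f s m := fun s hs =>
    IntegrableOn.of_bound hs hf.aestronglyMeasurable 1 <| .of_forall fun g =>
      (Real.norm_of_nonneg (hf0 g)).trans_le (hf1 g)
  have hcover : m.restrict (h • F) ≤ m.restrict F + m.restrict (h • F \ F) :=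
    (Measure.restrict_mono (by simp) le_rfl).trans (Measure.restrict_union_le _ _)
  rw [setIntegral_comp_mul_left]
  calc ∫ g in h • F, f g ∂m
      ≤ ∫ g, f g ∂(m.restrict F + m.restrict (h • F \ F)) :=
        integral_mono_measure hcover (.of_forall hf0)
          (integrable_add_measure.2 ⟨hint F hF.lt_top, hint _ hdiff⟩)
    _ = ∫ g in F, f g ∂m + ∫ g in h • F \ F, f g ∂m :=
        integral_add_measure (hint F hF.lt_top) (hint _ hdiff)
    _ ≤ ∫ g in F, f g ∂m + m.real (h • F \ F) := by
        gcongr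
        exact (setIntegral_mono (hint _ hdiff) (integrableOn_const hdiff.ne) hf1).trans_eq
          (by rw [setIntegral_const, smul_eq_mul, mul_one])
    _ ≤ ∫ g in F, f g ∂m + m.real ((h • F) ∆ F) := by
        gcongr
        · exact measure_symmDiff_ne_top hhF hF
        · exact Set.subset_union_left

lemma setIntegral_finsetAverage_comp_mul_left_le {E : Finset G} (hE : E.Nonempty) {δ : ℝ}
    (hF : m F ≠ ∞) (hf : Measurable f) (hf0 : ∀ g, 0 ≤ f g) (hf1 : ∀ g, f g ≤ 1)
    (hδ : ∀ h ∈ E, m.real ((h • F) ∆ F) ≤ δ) :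
    ∫ g in F, (1 / (E.card : ℝ)) * ∑ h ∈ E, f (h * g) ∂m ≤ ∫ g in F, f g ∂m + δ := by
  have hint : ∀ h : G, IntegrableOn (fun g => f (h * g)) F m := fun h =>
    IntegrableOn.of_bound hF.lt_top (hf.comp (measurable_const_mul h)).aestronglyMeasurable 1 <|
      .of_forall fun g => (Real.norm_of_nonneg (hf0 _)).trans_le (hf1 (h * g))
  have hcard : (0 : ℝ) < E.card := by exact_mod_cast hE.card_pos
  rw [integral_const_mul, integral_finsetSum E fun h _ => hint h, one_div,
    inv_mul_le_iff₀ hcard, ← nsmul_eq_mul]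
  exact Finset.sum_le_card_nsmul _ _ _ fun h hh =>
    (setIntegral_comp_mul_left_le hF hf hf0 hf1 h).trans (by gcongr; exact hδ h hh)

end Translation

lemma exists_forall_measureReal_smul_symmDiff_le {α β : Type*} [MeasurableSpace α] [SMul β α]
    {m : Measure α} {F : ℕ → Set α} (hF0 : ∀ n, m (F n) ≠ 0) (hF : ∀ n, m (F n) ≠ ∞)
    (hFolner : ∀ g : β, Tendsto (fun n => m ((g • F n) ∆ F n) / m (F n)) atTop (nhds 0))
    (E : Finset β) {δ : ℝ} (hδ : 0 < δ) :
    ∃ n, ∀ h ∈ E, m.real ((h • F n) ∆ F n) ≤ δ * m.real (F n) := by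
  obtain ⟨n, hn⟩ := ((Filter.eventually_all_finset E).2 fun h _ =>
    (hFolner h).eventually_lt_const (ENNReal.ofReal_pos.2 hδ)).exists
  refine ⟨n, fun h hh => ENNReal.toReal_le_of_le_ofReal (by positivity) ?_⟩
  rw [ENNReal.ofReal_mul hδ.le, measureReal_def, ENNReal.ofReal_toReal (hF n)]
  exact (ENNReal.div_lt_iff (.inl (hF0 n)) (.inl (hF n))).1 (hn h hh) |>.le

section Integrals

variable {X : Type*} [MeasurableSpace X] {μ : Measure X}

lemma integral_le_mul_measureReal_add_mul_measureReal_compl [IsFiniteMeasure μ] {f : X → ℝ}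
    {A : Set X} {a b : ℝ} (hf : Integrable f μ) (hA : MeasurableSet A)
    (hfa : ∀ x ∈ A, f x ≤ a) (hfb : ∀ x, f x ≤ b) :
    ∫ x, f x ∂μ ≤ a * μ.real A + b * μ.real Aᶜ := by
  rw [← integral_add_compl hA hf, mul_comm a, mul_comm b]
  gcongr
  · exact (setIntegral_mono_on hf.integrableOn (integrableOn_const (measure_ne_top _ _)) hA
      hfa).trans_eq (setIntegral_const a)
  · exact (setIntegral_mono_on hf.integrableOn (integrableOn_const (measure_ne_top _ _))
      hA.compl fun x _ => hfb x).trans_eq (setIntegral_const b)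

lemma ofReal_one_sub_lt_measure_setOf_lt [IsProbabilityMeasure μ] {ψ : X → ℝ}
    (hψ : Measurable ψ) (hψ0 : ∀ x, 0 ≤ ψ x) (hψ1 : ∀ x, ψ x ≤ 1) {t : ℝ} (ht : 0 < t)
    (hint : ∫ x, ψ x ∂μ < t ^ 2) : ENNReal.ofReal (1 - t) < μ {x | ψ x < t} := by
  rcases lt_or_ge 1 t with h1 | h1
  · have huniv : {x | ψ x < t} = Set.univ := Set.eq_univ_of_forall fun x => (hψ1 x).trans_lt h1
    rw [huniv, measure_univ, ENNReal.ofReal_lt_one]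
    linarith
  have hψint : Integrable ψ μ := .of_bound hψ.aestronglyMeasurable 1 <| .of_forall fun x =>
    (Real.norm_of_nonneg (hψ0 x)).trans_le (hψ1 x)
  have hmarkov := mul_meas_ge_le_integral_of_nonneg (.of_forall hψ0) hψint t
  have hcompl : {x | ψ x < t} = {x | t ≤ ψ x}ᶜ := by ext; simp
  rw [ENNReal.ofReal_lt_iff_lt_toReal (by linarith) (measure_ne_top _ _), ← measureReal_def,
    hcompl, probReal_compl_eq_one_sub (measurableSet_le measurable_const hψ)]
  nlinarith

lemma exists_integral_le_inv_mul_integral_setIntegral {G : Type*} [MeasurableSpace G]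
    {m : Measure G} [SFinite μ] {F : Set G} {Φ : G → X → ℝ} (hF0 : m F ≠ 0) (hF : m F ≠ ∞)
    (hΦ : Integrable (Function.uncurry Φ) ((m.restrict F).prod μ)) :
    ∃ g ∈ F, ∫ y, Φ g y ∂μ ≤ (m.real F)⁻¹ * ∫ y, ∫ g in F, Φ g y ∂m ∂μ := by
  have : IsFiniteMeasure (m.restrict F) := isFiniteMeasure_restrict.2 hF
  obtain ⟨g, hg, hle⟩ := exists_le_setAverage hF0 hF hΦ.integral_prod_left
  rw [setAverage_eq, smul_eq_mul] at hle
  rw [← integral_integral_swap hΦ]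
  exact ⟨g, hg, hle⟩

end Integrals

lemma measurable_setIntegral_dist_smul {G X : Type*} [TopologicalSpace G] [MeasurableSpace G]
    [OpensMeasurableSpace G] [PseudoMetricSpace X] [SecondCountableTopology X]
    [MeasurableSpace X] [BorelSpace X] [SMul G X] [ContinuousSMul G X] {m : Measure G}
    {F : Set G} (hF : m F ≠ ∞) (x : X) :
    Measurable fun y => ∫ g in F, dist (g • x) (g • y) ∂m :=
  have : IsFiniteMeasure (m.restrict F) := isFiniteMeasure_restrict.2 hF
  (StronglyMeasurable.integral_prod_left' (f := fun p : G × X => dist (p.1 • x) (p.1 • p.2))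
    ((continuous_fst.smul continuous_const).dist
      (continuous_fst.smul continuous_snd)).stronglyMeasurable).measurable

section MeanComplexity

variable {G X : Type*} [Group G] [TopologicalSpace G] [MeasurableSpace G] [BorelSpace G]
  [PseudoMetricSpace X] [MulAction G X] [ContinuousSMul G X] {E : Finset G} {ι : Type*}
  [Fintype ι] [Nonempty ι]

lemma integrable_minMeanDist_smul [SecondCountableTopology X] [MeasurableSpace X]
    [BorelSpace X] {μ : Measure X} (ν : Measure G) [IsFiniteMeasure ν] [IsFiniteMeasure μ]
    (hdist : ∀ a b : X, dist a b ≤ 1) (c : ι → X) :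
    Integrable (Function.uncurry fun g y => minMeanDist E (g • c) (g • y)) (ν.prod μ) :=
  .of_bound (Continuous.minMeanDist (fun _ => continuous_fst.smul continuous_const)
      (continuous_fst.smul continuous_snd)).aestronglyMeasurable 1 <|
    .of_forall fun _ => (Real.norm_of_nonneg (minMeanDist_nonneg _ _)).trans_le
      (minMeanDist_le_of_dist_le hdist _ _)

variable [ContinuousMul G] {m : Measure G} [m.IsMulLeftInvariant] {F : Set G} {δ ε : ℝ}

lemma setIntegral_minMeanDist_smul_le (hE : E.Nonempty) (hF : m F ≠ ∞)
    (hdist : ∀ a b : X, dist a b ≤ 1) (hδ : ∀ h ∈ E, m.real ((h • F) ∆ F) ≤ δ)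
    (c : ι → X) (y : X) (k : ι) :
    ∫ g in F, minMeanDist E (g • c) (g • y) ∂m ≤
      ∫ g in F, dist (g • c k) (g • y) ∂m + δ := by
  have hcont : ∀ x : X, Continuous fun g : G => g • x := fun x =>
    continuous_id.smul continuous_const
  have hmean : ∫ g in F, meanDist E (g • c k) (g • y) ∂m ≤
      ∫ g in F, dist (g • c k) (g • y) ∂m + δ := by
    simpa only [meanDist, smul_smul] using setIntegral_finsetAverage_comp_mul_left_le hE hF
      ((hcont _).dist (hcont _)).measurable (fun _ => dist_nonneg) (fun _ => hdist _ _) hδ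
  refine le_trans (setIntegral_mono ?_ ?_ fun g => minMeanDist_le _ _ k) hmean
  · refine IntegrableOn.of_bound hF.lt_top ?_ 1 (.of_forall fun g => ?_)
    · exact (Continuous.minMeanDist (fun k => hcont (c k)) (hcont y)).aestronglyMeasurable
    · exact (Real.norm_of_nonneg (minMeanDist_nonneg _ _)).trans_le
        (minMeanDist_le_of_dist_le hdist _ _)
  · refine IntegrableOn.of_bound hF.lt_top ?_ 1 (.of_forall fun g => ?_)
    · exact ((hcont _).meanDist (hcont y)).aestronglyMeasurable
    · exact (Real.norm_of_nonneg (meanDist_nonneg _ _)).trans_le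
        (meanDist_le_of_dist_le hdist _ _)

variable [SecondCountableTopology X] [MeasurableSpace X] [BorelSpace X] {μ : Measure X}

lemma integral_setIntegral_minMeanDist_smul_le [IsProbabilityMeasure μ] (hE : E.Nonempty)
    (hF0 : m F ≠ 0) (hF : m F ≠ ∞) (hdist : ∀ a b : X, dist a b ≤ 1) (hε : 0 ≤ ε)
    (hFol : ∀ h ∈ E, m.real ((h • F) ∆ F) ≤ ε * m.real F) (c : ι → X)
    (hc : ENNReal.ofReal (1 - ε) <
      μ {y | ∃ k, 1 / m.real F * ∫ g in F, dist (g • c k) (g • y) ∂m < ε}) :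
    ∫ y, ∫ g in F, minMeanDist E (g • c) (g • y) ∂m ∂μ ≤ 3 * ε * m.real F := by
  set M := m.real F
  set A := {y | ∃ k, 1 / M * ∫ g in F, dist (g • c k) (g • y) ∂m < ε}
  have hM : 0 < M := ENNReal.toReal_pos hF0 hF
  have : IsFiniteMeasure (m.restrict F) := isFiniteMeasure_restrict.2 hF
  have hA : MeasurableSet A := by
    simp only [A, Set.ofPred_exists]
    exact .iUnion fun k => measurableSet_lt
      (measurable_const.mul (measurable_setIntegral_dist_smul hF (c k))) measurable_const
  have hAc : μ.real Aᶜ ≤ ε := by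
    have := (ENNReal.ofReal_le_iff_le_toReal (measure_ne_top _ _)).1 hc.le
    rw [probReal_compl_eq_one_sub hA, measureReal_def]
    linarith
  have hIA : ∀ y ∈ A, ∫ g in F, minMeanDist E (g • c) (g • y) ∂m ≤ 2 * ε * M := by
    rintro y ⟨k, hk⟩
    have := setIntegral_minMeanDist_smul_le hE hF hdist hFol c y k
    rw [one_div, inv_mul_lt_iff₀ hM] at hk
    linarith
  have hI1 : ∀ y, ∫ g in F, minMeanDist E (g • c) (g • y) ∂m ≤ M := fun y =>
    (Real.le_norm_self _).trans <| (norm_setIntegral_le_of_norm_le_const hF.lt_top fun g _ =>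
      (Real.norm_of_nonneg (minMeanDist_nonneg _ _)).trans_le
        (minMeanDist_le_of_dist_le hdist _ _)).trans_eq (one_mul M)
  calc ∫ y, ∫ g in F, minMeanDist E (g • c) (g • y) ∂m ∂μ
      ≤ 2 * ε * M * μ.real A + M * μ.real Aᶜ :=
        integral_le_mul_measureReal_add_mul_measureReal_compl
          (integrable_minMeanDist_smul (μ := μ) _ hdist c).integral_prod_right hA hIA hI1
    _ ≤ 3 * ε * M := by
        nlinarith [mul_le_mul_of_nonneg_left (measureReal_le_one (μ := μ) (s := A))
          (by positivity : 0 ≤ 2 * ε * M), mul_le_mul_of_nonneg_left hAc hM.le]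

lemma exists_integral_minMeanDist_smul_le [IsProbabilityMeasure μ] [SMulInvariantMeasure G X μ]
    (hE : E.Nonempty) (hF0 : m F ≠ 0) (hF : m F ≠ ∞) (hdist : ∀ a b : X, dist a b ≤ 1)
    (hε : 0 ≤ ε) (hFol : ∀ h ∈ E, m.real ((h • F) ∆ F) ≤ ε * m.real F) (c : ι → X)
    (hc : ENNReal.ofReal (1 - ε) <
      μ {y | ∃ k, 1 / m.real F * ∫ g in F, dist (g • c k) (g • y) ∂m < ε}) :
    ∃ g₀ : G, ∫ y, minMeanDist E (g₀ • c) y ∂μ ≤ 3 * ε := by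
  have : IsFiniteMeasure (m.restrict F) := isFiniteMeasure_restrict.2 hF
  have hM : 0 < m.real F := ENNReal.toReal_pos hF0 hF
  obtain ⟨g₀, -, hg₀⟩ :=
    exists_integral_le_inv_mul_integral_setIntegral hF0 hF
      (integrable_minMeanDist_smul (μ := μ) (m.restrict F) hdist c)
  refine ⟨g₀, ?_⟩
  rw [← (measurePreserving_smul g₀ μ).integral_comp (measurableEmbedding_const_smul g₀)]
  calc _ ≤ (m.real F)⁻¹ * (3 * ε * m.real F) :=
        hg₀.trans <| by
          gcongr
          exact integral_setIntegral_minMeanDist_smul_le hE hF0 hF hdist hε hFol c hc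
    _ = 3 * ε := by field_simp

end MeanComplexity

theorem max_mean_complexity_of_mean_complexity_along_folner_general
    {G X : Type*} [Group G] [TopologicalSpace G] [IsTopologicalGroup G]
    [MeasurableSpace G] [BorelSpace G]
    [MetricSpace X] [CompactSpace X] [MeasurableSpace X] [BorelSpace X]
    [MulAction G X] [ContinuousSMul G X]
    (m : Measure G) [m.IsHaarMeasure]
    (F : ℕ → Set G)
    (hF0 : ∀ n, 0 < m (F n)) (hFfin : ∀ n, m (F n) < ⊤)
    (hFolner : ∀ g : G,
      Tendsto (fun n => m ((g • F n) ∆ F n) / m (F n)) atTop (nhds 0))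
    (μ : Measure X) [IsProbabilityMeasure μ] [SMulInvariantMeasure G X μ]
    (hdiam : Metric.diam (Set.univ : Set X) ≤ 1)
    (ε : ℝ) (hε : 0 < ε) (K : ℕ)
    (hcomp : ∀ n : ℕ, ∃ c : Fin K → X,
      μ {y : X | ∃ k,
          (1 / (m (F n)).toReal) * (∫ g in F n, dist (g • c k) (g • y) ∂m) < ε}
        > ENNReal.ofReal (1 - ε)) :
    ∀ E : Finset G, E.Nonempty →
      ∃ c : Fin K → X,
        μ {y : X | ∃ k,
            (1 / (E.card : ℝ)) * ∑ g ∈ E, dist (g • c k) (g • y) < 2 * Real.sqrt ε}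
          > ENNReal.ofReal (1 - 2 * Real.sqrt ε) := by
  intro E hE
  have hdist : ∀ a b : X, dist a b ≤ 1 := fun a b =>
    (Metric.dist_le_diam_of_mem isCompact_univ.isBounded trivial trivial).trans hdiam
  obtain ⟨n, hn⟩ := exists_forall_measureReal_smul_symmDiff_le (fun n => (hF0 n).ne')
    (fun n => (hFfin n).ne) hFolner E hε
  obtain ⟨c, hc⟩ := hcomp n
  have : Nonempty (Fin K) := by
    obtain ⟨-, k, -⟩ := nonempty_of_measure_ne_zero (pos_of_gt hc).ne'
    exact ⟨k⟩
  obtain ⟨g₀, hg₀⟩ := exists_integral_minMeanDist_smul_le hE (hF0 n).ne' (hFfin n).ne hdist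
    hε.le hn c hc
  have hmarkov : ENNReal.ofReal (1 - 2 * √ε) < μ {y | minMeanDist E (g₀ • c) y < 2 * √ε} := by
    refine ofReal_one_sub_lt_measure_setOf_lt ?_ (fun y => minMeanDist_nonneg _ y)
      (minMeanDist_le_of_dist_le hdist _) (by positivity) ?_
    · exact (Continuous.minMeanDist (fun _ => continuous_const) continuous_id).measurable
    · rw [mul_pow, Real.sq_sqrt hε.le]
      linarith
  exact ⟨g₀ • c, hmarkov.trans_le <|
    measure_mono fun y hy => exists_meanDist_lt_of_minMeanDist_lt hy⟩

/-- For a locally compact amenable group `G` with Haar measure `m` and Følner sequence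
`F n` acting on a compact metric space `X` of diameter at most 1, preserving `μ`:
if for some `ε > 0` and `K`, for every `n` the space can be `(1−ε)`-covered by `K`
balls of radius `ε` in the mean metric along `F n`, then for every nonempty finite
`E ⊆ G` the space can be `(1−2√ε)`-covered by `K` balls of radius `2√ε` in the mean
metric `d_{ρ_E}`.  (This is the statement `S_{ρ_E}(X,μ,G,2√ε) ≤ K(ε)`.) -/
theorem max_mean_complexity_of_mean_complexity_along_folner
    {G X : Type*} [Group G] [TopologicalSpace G] [IsTopologicalGroup G]
    [LocallyCompactSpace G] [MeasurableSpace G] [BorelSpace G]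
    [MetricSpace X] [CompactSpace X] [MeasurableSpace X] [BorelSpace X]
    [MulAction G X] [ContinuousSMul G X]
    (m : Measure G) [m.IsHaarMeasure]
    (F : ℕ → Set G) (hFc : ∀ n, IsCompact (F n))
    (hF0 : ∀ n, 0 < m (F n)) (hFfin : ∀ n, m (F n) < ⊤)
    (hFolner : ∀ g : G,
      Tendsto (fun n => m ((g • F n) ∆ F n) / m (F n)) atTop (nhds 0))
    (μ : Measure X) [IsProbabilityMeasure μ] [SMulInvariantMeasure G X μ]
    (hdiam : Metric.diam (Set.univ : Set X) ≤ 1)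
    (ε : ℝ) (hε : 0 < ε) (K : ℕ)
    (hcomp : ∀ n : ℕ, ∃ c : Fin K → X,
      μ {y : X | ∃ k,
          (1 / (m (F n)).toReal) * (∫ g in F n, dist (g • c k) (g • y) ∂m) < ε}
        > ENNReal.ofReal (1 - ε)) :
    ∀ E : Finset G, E.Nonempty →
      ∃ c : Fin K → X,
        μ {y : X | ∃ k,
            (1 / (E.card : ℝ)) * ∑ g ∈ E, dist (g • c k) (g • y) < 2 * Real.sqrt ε}
          > ENNReal.ofReal (1 - 2 * Real.sqrt ε) :=
  max_mean_complexity_of_mean_complexity_along_folner_general m F hF0 hFfin hFolner μ hdiam ε hε K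
    hcomp
end

section
/- Let G be a locally compact amenable group acting continuously on a compact metric space X with Følner sequence {F_n}, and let μ be a G-invariant Borel probability measure. If μ is equicontinuous in the mean along {F_n} (for every τ > 0 there is a compact Q with μ(Q) > 1−τ such that for every ε > 0 there is δ > 0 with x,y ∈ Q, d(x,y) < δ implying d_{m_G|_{F_n}}(x,y) < ε for all n), then μ has bounded mean-complexity along {F_n}: for every ε > 0 there is K such that S_{m_G|_{F_n}}(X,μ,G,ε) ≤ K for all n. -/
open MeasureTheory Pointwise symmDiff Filter

theorem IsCompact.exists_fin_centers_dist_lt {X : Type*} [PseudoMetricSpace X] {Q : Set X}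
    (hQ : IsCompact Q) {δ : ℝ} (hδ : 0 < δ) :
    ∃ K : ℕ, ∃ c : Fin K → X, (∀ k, c k ∈ Q) ∧ ∀ y ∈ Q, ∃ k, dist (c k) y < δ := by
  obtain ⟨t, htQ, htfin, hcov⟩ := hQ.finite_cover_balls hδ
  have := htfin.to_subtype
  obtain ⟨K, ⟨e⟩⟩ := Finite.exists_equiv_fin t
  refine ⟨K, fun k => e.symm k, fun k => htQ (e.symm k).2, fun y hy => ?_⟩
  obtain ⟨x, hxt, hxy⟩ := Set.mem_iUnion₂.1 (hcov hy)
  exact ⟨e ⟨x, hxt⟩, by simpa [dist_comm] using hxy⟩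

theorem bounded_mean_complexity_of_equicontinuous_in_mean_general
    {G X : Type*} [Group G] [MeasurableSpace G]
    [MetricSpace X] [MeasurableSpace X]
    [MulAction G X]
    (m : Measure G)
    (F : ℕ → Set G)
    (μ : Measure X)
    (hequi : ∀ τ : ℝ, 0 < τ → ∃ Q : Set X, IsCompact Q ∧ μ Q > ENNReal.ofReal (1 - τ) ∧
      ∀ ε : ℝ, 0 < ε → ∃ δ : ℝ, 0 < δ ∧
        ∀ x ∈ Q, ∀ y ∈ Q, dist x y < δ → ∀ n : ℕ,
          (1 / (m (F n)).toReal) * (∫ g in F n, dist (g • x) (g • y) ∂m) < ε) :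
    ∀ ε : ℝ, 0 < ε → ∃ K : ℕ, ∀ n : ℕ,
      ∃ c : Fin K → X,
        μ {y : X | ∃ k,
            (1 / (m (F n)).toReal) * (∫ g in F n, dist (g • c k) (g • y) ∂m) < ε}
          > ENNReal.ofReal (1 - ε) := by
  intro ε hε
  obtain ⟨Q, hQc, hQμ, hQ⟩ := hequi ε hε
  obtain ⟨δ, hδ, hδQ⟩ := hQ ε hε
  obtain ⟨K, c, hcQ, hcov⟩ := hQc.exists_fin_centers_dist_lt hδ
  refine ⟨K, fun n => ⟨c, hQμ.trans_le (measure_mono fun y hy => ?_)⟩⟩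
  obtain ⟨k, hk⟩ := hcov y hy
  exact ⟨k, hδQ (c k) (hcQ k) y hy hk n⟩

/-- If a `G`-invariant measure `μ` is equicontinuous in the mean along a Følner sequence
`{F n}`, then `μ` has bounded mean-complexity along `{F n}`. -/
theorem bounded_mean_complexity_of_equicontinuous_in_mean
    {G X : Type*} [Group G] [TopologicalSpace G] [IsTopologicalGroup G]
    [LocallyCompactSpace G] [MeasurableSpace G] [BorelSpace G]
    [MetricSpace X] [CompactSpace X] [MeasurableSpace X] [BorelSpace X]
    [MulAction G X] [ContinuousSMul G X]
    (m : Measure G) [m.IsHaarMeasure]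
    (F : ℕ → Set G) (hFc : ∀ n, IsCompact (F n))
    (hF0 : ∀ n, 0 < m (F n)) (hFfin : ∀ n, m (F n) < ⊤)
    (hFolner : ∀ g : G,
      Tendsto (fun n => m ((g • F n) ∆ F n) / m (F n)) atTop (nhds 0))
    (μ : Measure X) [IsProbabilityMeasure μ] [SMulInvariantMeasure G X μ]
    (hequi : ∀ τ : ℝ, 0 < τ → ∃ Q : Set X, IsCompact Q ∧ μ Q > ENNReal.ofReal (1 - τ) ∧
      ∀ ε : ℝ, 0 < ε → ∃ δ : ℝ, 0 < δ ∧
        ∀ x ∈ Q, ∀ y ∈ Q, dist x y < δ → ∀ n : ℕ,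
          (1 / (m (F n)).toReal) * (∫ g in F n, dist (g • x) (g • y) ∂m) < ε) :
    ∀ ε : ℝ, 0 < ε → ∃ K : ℕ, ∀ n : ℕ,
      ∃ c : Fin K → X,
        μ {y : X | ∃ k,
            (1 / (m (F n)).toReal) * (∫ g in F n, dist (g • c k) (g • y) ∂m) < ε}
          > ENNReal.ofReal (1 - ε) :=
  bounded_mean_complexity_of_equicontinuous_in_mean_general m F μ hequi
end
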